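/- If σ is strongly erasing and verifies the optimality condition, then f_σ has sensitive dependence on initial conditions with sensitivity constant 1/2: for every x ∈ [0,1] and every δ > 0 there exist z with |x − z| < δ and n ∈ ℕ such that |f_σⁿ(x) − f_σⁿ(z)| ≥ 1/2. -/

import Mathlib

/-- Apply a `k`-block substitution blockwise to a finite word, dropping the
trailing partial block (the paper's truncation convention). -/
def blockApply (k : Nat) (sigma : List Bool -> List Bool) (w : List Bool) : List Bool :=
  if h : 0 < k && k <= w.length then
    sigma (w.take k) ++ blockApply k sigma (w.drop k)
  else []
termination_by w.length
decreasing_by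
  simp only [Bool.and_eq_true, decide_eq_true_eq] at h
  simp [List.length_drop]
  omega

/-- The length-`m` prefix of an infinite binary word. -/
def prefixOf (u : Nat -> Bool) (m : Nat) : List Bool := List.ofFn fun i : Fin m => u i

/-- Concatenation of the first `m` words of a sequence of finite words. -/
def concatPre (v : Nat -> List Bool) (m : Nat) : List Bool :=
  (List.ofFn fun i : Fin m => v i).flatten

/-- The optimality condition: every infinite binary word is an infinite
concatenation of nonempty images of length-`k` blocks under `sigma`. -/
def OC (k : Nat) (sigma : List Bool -> List Bool) : Prop :=
  ∀ w : Nat -> Bool, ∃ u : Nat -> List Bool,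
    (∀ i, (u i).length = k ∧ sigma (u i) ≠ []) ∧
    ∀ m, concatPre (fun i => sigma (u i)) m
        = prefixOf w (concatPre (fun i => sigma (u i)) m).length

/-- Value of a finite binary word read as binary digits after the point. -/
noncomputable def valFin (w : List Bool) : ℝ :=
  (w.zipIdx.map fun p => if p.1 then ((2:ℝ))⁻¹ ^ (p.2 + 1) else 0).sum

/-- Value of an infinite binary word read as binary digits after the point. -/
noncomputable def valInf (u : Nat -> Bool) : ℝ :=
  ∑' i : Nat, if u i then ((2:ℝ))⁻¹ ^ (i + 1) else 0

/-- A word is not eventually zero (it has infinitely many ones). -/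
def NEZ (u : Nat -> Bool) : Prop := ∀ n, ∃ m, n ≤ m ∧ u m = true

open Classical in
/-- The unique binary expansion of `x ∈ (0,1]` not ending in `0^∞`
(junk value, the zero word, if no such expansion exists). -/
noncomputable def tilde (x : ℝ) : Nat -> Bool :=
  if h : ∃ u : Nat -> Bool, NEZ u ∧ valInf u = x then h.choose else fun _ => false

open Classical in
/-- The interval map induced by the erasing `k`-block substitution `sigma`
(with erased block `weps`) acting on binary expansions: `f x = 0.sigma(x̃)`,
with value `0` at `x = 0` (no expansion not ending in `0^∞`) and when
`x̃ = weps^∞`. -/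
noncomputable def fSigma (k : Nat) (sigma : List Bool -> List Bool) (weps : List Bool)
    (x : ℝ) : ℝ :=
  if (¬ ∃ u : Nat -> Bool, NEZ u ∧ valInf u = x) ∨
     (∀ i : Nat, tilde x i = weps.getD (i % k) false) then 0
  else ⨆ n : Nat, valFin (blockApply k sigma (prefixOf (tilde x) (n * k)))

/-- The set of `k`-roundings of a finite word `w`: extensions of `w` of length
the least multiple of `k` that is `≥ |w|`. -/
def kRound (k : Nat) (w : List Bool) : Set (List Bool) :=
  {u | ∃ v : List Bool, u = w ++ v ∧ u.length = k * ((w.length + k - 1) / k)}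

/-- `wIter k sigma n w` is the set `w^[n]` of the paper: `w^[0] = {w}` and
`w^[n] = {sigma(r) : r a k-rounding of an element of w^[n-1]}`. -/
def wIter (k : Nat) (sigma : List Bool -> List Bool) : Nat -> List Bool -> Set (List Bool)
  | 0, w => {w}
  | n + 1, w => {u | ∃ p ∈ wIter k sigma n w, ∃ r ∈ kRound k p, u = blockApply k sigma r}

/-!
Let `p` be the length-`m` prefix of a binary expansion of `x`. Strong erasure gives `n` with
`[] ∈ p^[n]`, hence `[] ∈ p^[n+1]`. Each step `r ↦ σ(r)` of this chain can be inverted on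
infinite words: by the optimality condition any tail is the `σ`-image of a word `d` which can be
chosen with infinitely many ones (interleave the erased block `w_ε` if it contains a one;
otherwise every non-erased block contains one), so that `r d` is the expansion `x̃` that `f_σ`
reads. Hence every point `0.t` is `f_σ^[n+1]` of a point of the cylinder `[p]`, which lies within
`2⁻ᵐ` of `x` (the paper's key lemma). Taking `t = 1^∞` or `0^∞`, on the side of `1/2` away from
`f_σ^[n+1] x`, separates the orbits by `1/2`.
-/

section Words

variable {k : ℕ} {sigma : List Bool → List Bool}

@[simp] lemma prefixOf_length (u : ℕ → Bool) (m : ℕ) : (prefixOf u m).length = m := by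
  simp [prefixOf]

@[simp] lemma prefixOf_zero (u : ℕ → Bool) : prefixOf u 0 = [] := rfl

@[simp] lemma prefixOf_getElem (u : ℕ → Bool) (m i : ℕ) (h : i < (prefixOf u m).length) :
    (prefixOf u m)[i] = u i := by
  simp [prefixOf]

lemma prefixOf_succ (u : ℕ → Bool) (m : ℕ) :
    prefixOf u (m + 1) = u 0 :: prefixOf (fun i => u (i + 1)) m := by
  simp [prefixOf, List.ofFn_succ]

lemma prefixOf_add (u : ℕ → Bool) (a b : ℕ) :
    prefixOf u (a + b) = prefixOf u a ++ prefixOf (fun i => u (i + a)) b := by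
  simp [prefixOf, List.ofFn_add, add_comm]

lemma prefixOf_isPrefix_prefixOf (u : ℕ → Bool) {a b : ℕ} (h : a ≤ b) :
    prefixOf u a <+: prefixOf u b := by
  obtain ⟨c, rfl⟩ := Nat.exists_eq_add_of_le h
  rw [prefixOf_add]
  exact List.prefix_append _ _

lemma prefixOf_eq_of_isPrefix {u : ℕ → Bool} {w w' : List Bool}
    (h : prefixOf u w.length = w) (hw : w' <+: w) : prefixOf u w'.length = w' := by
  obtain ⟨v, rfl⟩ := hw
  rw [List.length_append, prefixOf_add] at h
  exact (List.append_inj h (by simp)).1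

@[simp] lemma blockApply_nil : blockApply k sigma [] = [] := by
  rw [blockApply, dif_neg (by simp; omega)]

lemma blockApply_of_le {w : List Bool} (hk : 0 < k) (hw : k ≤ w.length) :
    blockApply k sigma w = sigma (w.take k) ++ blockApply k sigma (w.drop k) := by
  rw [blockApply, dif_pos (by simpa using ⟨hk, hw⟩)]

lemma blockApply_of_length_eq {w : List Bool} (hk : 0 < k) (hw : w.length = k) :
    blockApply k sigma w = sigma w := by
  rw [blockApply_of_le hk hw.ge, List.take_of_length_le hw.le, List.drop_of_length_le hw.le,
    blockApply_nil, List.append_nil]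

lemma blockApply_append {a : List Bool} (hk : 0 < k) (ha : k ∣ a.length) (b : List Bool) :
    blockApply k sigma (a ++ b) = blockApply k sigma a ++ blockApply k sigma b := by
  obtain ⟨q, hq⟩ := ha
  induction q generalizing a with
  | zero => simp [List.eq_nil_of_length_eq_zero (hq.trans (mul_zero k))]
  | succ q ih =>
    have hka : k ≤ a.length := by rw [hq]; exact Nat.le_mul_of_pos_right k q.succ_pos
    rw [blockApply_of_le hk (by simp; omega), blockApply_of_le hk hka,
      List.take_append_of_le_length hka, List.drop_append_of_le_length hka,
      ih (by rw [List.length_drop, hq, Nat.mul_succ]; omega), List.append_assoc]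

lemma blockApply_isPrefix_of_isPrefix {a r : List Bool} (hk : 0 < k) (ha : k ∣ a.length)
    (h : a <+: r) : blockApply k sigma a <+: blockApply k sigma r := by
  obtain ⟨b, rfl⟩ := h
  rw [blockApply_append hk ha]
  exact List.prefix_append _ _

lemma concatPre_succ (v : ℕ → List Bool) (m : ℕ) :
    concatPre v (m + 1) = concatPre v m ++ v m := by
  rw [concatPre, concatPre, List.ofFn_succ_last, List.flatten_append]
  simp

lemma le_length_concatPre {v : ℕ → List Bool} (hv : ∀ i, v i ≠ []) (m : ℕ) :
    m ≤ (concatPre v m).length := by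
  induction m with
  | zero => exact Nat.zero_le _
  | succ m ih =>
    rw [concatPre_succ, List.length_append]
    have := List.length_pos_iff.mpr (hv m)
    omega

lemma concatPre_interleave_nil (v : ℕ → List Bool) (m : ℕ) :
    concatPre (fun i => if i % 2 = 0 then [] else v (i / 2)) m = concatPre v (m / 2) := by
  induction m with
  | zero => rfl
  | succ m ih =>
    rw [concatPre_succ, ih]
    rcases Nat.mod_two_eq_zero_or_one m with hm | hm
    · rw [if_pos hm, List.append_nil]
      congr 1
      omega
    · rw [if_neg (by omega), ← concatPre_succ]
      congr 1
      omega

lemma length_concatPre {B : ℕ → List Bool} (hB : ∀ i, (B i).length = k) (m : ℕ) :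
    (concatPre B m).length = m * k := by
  induction m with
  | zero => simp [concatPre]
  | succ m ih => rw [concatPre_succ, List.length_append, ih, hB, Nat.succ_mul]

lemma blockApply_concatPre {B : ℕ → List Bool} (hk : 0 < k) (hB : ∀ i, (B i).length = k)
    (m : ℕ) : blockApply k sigma (concatPre B m) = concatPre (fun i => sigma (B i)) m := by
  induction m with
  | zero => simp [concatPre]
  | succ m ih =>
    have hdvd : k ∣ (concatPre B m).length := length_concatPre hB m ▸ dvd_mul_left k m
    rw [concatPre_succ, concatPre_succ, blockApply_append hk hdvd, ih,
      blockApply_of_length_eq hk (hB m)]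

def prepend (w : List Bool) (s : ℕ → Bool) : ℕ → Bool :=
  fun i => if h : i < w.length then w[i] else s (i - w.length)

lemma prefixOf_prepend (w : List Bool) (s : ℕ → Bool) (j : ℕ) :
    prefixOf (prepend w s) (w.length + j) = w ++ prefixOf s j := by
  refine List.ext_getElem (by simp) fun i h _ => ?_
  rw [prefixOf_getElem, prepend]
  split_ifs with hi
  · rw [List.getElem_append_left hi]
  · rw [List.getElem_append_right (not_lt.mp hi), prefixOf_getElem]

lemma prefixOf_prepend_self (w : List Bool) (s : ℕ → Bool) :
    prefixOf (prepend w s) w.length = w := by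
  simpa using prefixOf_prepend w s 0

lemma prepend_eq_of_prefixOf {w : List Bool} {s : ℕ → Bool} (h : prefixOf s w.length = w) :
    prepend w (fun i => s (i + w.length)) = s := by
  funext i
  rw [prepend]
  split_ifs with hi
  · rw [← prefixOf_getElem s w.length i (by simpa using hi)]
    simp only [h]
  · rw [Nat.sub_add_cancel (not_lt.mp hi)]

lemma NEZ.prepend {s : ℕ → Bool} (hs : NEZ s) (w : List Bool) : NEZ (prepend w s) := fun n => by
  obtain ⟨m, hm, hsm⟩ := hs n
  refine ⟨w.length + m, by omega, ?_⟩
  rwa [_root_.prepend, dif_neg (by omega), Nat.add_sub_cancel_left]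

/-- The concatenation `B 0 B 1 B 2 ⋯` of words of length `k`. -/
def blockSeq (k : ℕ) (B : ℕ → List Bool) : ℕ → Bool :=
  fun j => (B (j / k)).getD (j % k) false

lemma blockSeq_mul_add {B : ℕ → List Bool} (hk : 0 < k) (i : ℕ) {j : ℕ} (hj : j < k) :
    blockSeq k B (i * k + j) = (B i).getD j false := by
  rw [blockSeq, Nat.mul_comm, Nat.mul_add_div hk, Nat.div_eq_of_lt hj, Nat.add_zero,
    Nat.mul_add_mod, Nat.mod_eq_of_lt hj]

lemma prefixOf_blockSeq {B : ℕ → List Bool} (hk : 0 < k) (hB : ∀ i, (B i).length = k)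
    (m : ℕ) : prefixOf (blockSeq k B) (m * k) = concatPre B m := by
  induction m with
  | zero => simp [prefixOf, concatPre]
  | succ m ih =>
    rw [Nat.succ_mul, prefixOf_add, ih, concatPre_succ]
    congr 1
    refine List.ext_getElem (by simp [hB]) fun j hj _ => ?_
    rw [prefixOf_getElem, Nat.add_comm, blockSeq_mul_add hk m (by simpa using hj),
      List.getD_eq_getElem]

lemma nez_blockSeq {B : ℕ → List Bool} (hk : 0 < k) (hB : ∀ i, (B i).length = k)
    (hone : ∀ n, ∃ i, n ≤ i ∧ true ∈ B i) : NEZ (blockSeq k B) := fun n => by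
  obtain ⟨i, hi, hmem⟩ := hone n
  obtain ⟨j, hj, hij⟩ := List.getElem_of_mem hmem
  refine ⟨i * k + j, le_add_right (hi.trans (Nat.le_mul_of_pos_right i hk)), ?_⟩
  rw [blockSeq_mul_add hk i (hB i ▸ hj), List.getD_eq_getElem _ _ hj, hij]

end Words

section BinaryValue

@[simp] lemma valFin_nil : valFin [] = 0 := by simp [valFin]

lemma valFin_cons (b : Bool) (w : List Bool) :
    valFin (b :: w) = (if b then 2⁻¹ else 0) + 2⁻¹ * valFin w := by
  simp only [valFin, List.zipIdx_cons, List.map_cons, List.sum_cons, List.zipIdx_succ,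
    List.map_map, ← List.sum_map_mul_left]
  congr 2
  · simp
  · congr 1
    funext ⟨a, i⟩
    cases a <;> simp [pow_succ]
    ring

lemma valFin_append (w v : List Bool) :
    valFin (w ++ v) = valFin w + 2⁻¹ ^ w.length * valFin v := by
  induction w with
  | nil => simp
  | cons b w ih =>
    simp only [List.cons_append, valFin_cons, ih, List.length_cons]
    ring

lemma summable_valInf (u : ℕ → Bool) :
    Summable fun i => if u i then (2:ℝ)⁻¹ ^ (i + 1) else 0 :=
  ((summable_nat_add_iff 1).mpr
    (summable_geometric_of_lt_one (r := (2:ℝ)⁻¹) (by norm_num) (by norm_num))).of_nonneg_of_le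
    (fun i => by split <;> positivity) (fun i => by split <;> simp)

lemma tsum_inv_two_pow_succ : ∑' i : ℕ, (2:ℝ)⁻¹ ^ (i + 1) = 1 := by
  simp only [pow_succ, tsum_mul_right, tsum_geometric_inv_two]
  norm_num

lemma valInf_nonneg (u : ℕ → Bool) : 0 ≤ valInf u :=
  tsum_nonneg fun i => by split <;> positivity

lemma valInf_le_one (u : ℕ → Bool) : valInf u ≤ 1 := by
  rw [valInf, ← tsum_inv_two_pow_succ]
  exact (summable_valInf u).tsum_le_tsum (fun i => by split <;> simp)
    ((summable_nat_add_iff 1).mpr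
      (summable_geometric_of_lt_one (r := (2:ℝ)⁻¹) (by norm_num) (by norm_num)))

@[simp] lemma valInf_const_false : valInf (fun _ => false) = 0 := by simp [valInf]

@[simp] lemma valInf_const_true : valInf (fun _ => true) = 1 := by
  simp only [valInf, ↓reduceIte, tsum_inv_two_pow_succ]

lemma valInf_cons (u : ℕ → Bool) :
    valInf u = (if u 0 then 2⁻¹ else 0) + 2⁻¹ * valInf (fun i => u (i + 1)) := by
  rw [valInf, (summable_valInf u).tsum_eq_zero_add, valInf, ← tsum_mul_left]
  congr 1
  · simp
  · congr 1
    funext i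
    split <;> simp [pow_succ]
    ring

lemma valInf_eq_valFin_prefixOf_add (u : ℕ → Bool) (m : ℕ) :
    valInf u = valFin (prefixOf u m) + 2⁻¹ ^ m * valInf (fun i => u (i + m)) := by
  induction m generalizing u with
  | zero => simp
  | succ m ih =>
    rw [valInf_cons, ih, prefixOf_succ, valFin_cons, pow_succ]
    simp only [add_assoc]
    ring

lemma valFin_prefixOf_le_valInf (u : ℕ → Bool) (m : ℕ) :
    valFin (prefixOf u m) ≤ valInf u := by
  rw [valInf_eq_valFin_prefixOf_add u m]
  have := valInf_nonneg (fun i => u (i + m))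
  have : (0:ℝ) ≤ 2⁻¹ ^ m := by positivity
  nlinarith

lemma valInf_le_valFin_prefixOf_add (u : ℕ → Bool) (m : ℕ) :
    valInf u ≤ valFin (prefixOf u m) + 2⁻¹ ^ m := by
  rw [valInf_eq_valFin_prefixOf_add u m]
  have := valInf_le_one (fun i => u (i + m))
  have : (0:ℝ) ≤ 2⁻¹ ^ m := by positivity
  nlinarith

lemma abs_sub_valInf_le {x : ℝ} {p : List Bool} {u : ℕ → Bool} (hpx : valFin p ≤ x)
    (hxp : x ≤ valFin p + 2⁻¹ ^ p.length) (hu : prefixOf u p.length = p) :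
    |x - valInf u| ≤ 2⁻¹ ^ p.length := by
  have h₁ := valFin_prefixOf_le_valInf u p.length
  have h₂ := valInf_le_valFin_prefixOf_add u p.length
  rw [hu] at h₁ h₂
  exact abs_sub_le_iff.mpr ⟨by linarith, by linarith⟩

lemma exists_valFin_approx {x : ℝ} (hx : x ∈ Set.Icc (0:ℝ) 1) (m : ℕ) :
    ∃ p : List Bool, p.length = m ∧ valFin p ≤ x ∧ x ≤ valFin p + 2⁻¹ ^ m := by
  induction m generalizing x with
  | zero => exact ⟨[], rfl, by simpa using hx.1, by simpa using hx.2⟩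
  | succ m ih =>
    by_cases hhalf : x ≤ 2⁻¹
    · obtain ⟨p, hp, h₁, h₂⟩ := ih (x := 2 * x) ⟨by linarith [hx.1], by linarith⟩
      refine ⟨false :: p, by simp [hp], ?_, ?_⟩ <;> simp only [valFin_cons, pow_succ] <;>
        norm_num <;> linarith
    · obtain ⟨p, hp, h₁, h₂⟩ := ih (x := 2 * x - 1) ⟨by linarith, by linarith [hx.2]⟩
      refine ⟨true :: p, by simp [hp], ?_, ?_⟩ <;> simp only [valFin_cons, pow_succ] <;>
        norm_num <;> linarith

end BinaryValue

section Expansion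

lemma NEZ.shift {u : ℕ → Bool} (hu : NEZ u) (m : ℕ) : NEZ fun i => u (i + m) := fun n => by
  obtain ⟨j, hj, hju⟩ := hu (n + m)
  exact ⟨j - m, by omega, by simpa only [Nat.sub_add_cancel (le_of_add_le_right hj)]⟩

lemma NEZ.valInf_pos {u : ℕ → Bool} (hu : NEZ u) : 0 < valInf u := by
  obtain ⟨m, -, hm⟩ := hu 0
  have hle := (summable_valInf u).le_tsum m (fun j _ => by split <;> positivity)
  simp only [hm, ↓reduceIte] at hle
  exact (pow_pos (by norm_num) _).trans_le hle

lemma NEZ.head_eq_true_iff {u : ℕ → Bool} (hu : NEZ u) : u 0 = true ↔ 2⁻¹ < valInf u := by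
  have hpos := (hu.shift 1).valInf_pos
  have hle := valInf_le_one fun i => u (i + 1)
  rw [valInf_cons]
  cases u 0 <;> simp <;> linarith

lemma NEZ.eq_of_valInf_eq {u v : ℕ → Bool} (hu : NEZ u) (hv : NEZ v) (h : valInf u = valInf v) :
    u = v := by
  have head : ∀ m, valInf (fun i => u (i + m)) = valInf (fun i => v (i + m)) → u m = v m := by
    intro m hm
    have hu' := (hu.shift m).head_eq_true_iff
    have hv' := (hv.shift m).head_eq_true_iff
    rw [zero_add] at hu' hv'
    rw [Bool.eq_iff_iff, hu', hv', hm]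
  have tails : ∀ m, valInf (fun i => u (i + m)) = valInf (fun i => v (i + m)) := by
    intro m
    induction m with
    | zero => exact h
    | succ m ih =>
      have hm := head m ih
      rw [valInf_cons (fun i => u (i + m)), valInf_cons (fun i => v (i + m))] at ih
      simp only [zero_add, hm, add_right_inj, mul_eq_mul_left_iff, inv_eq_zero,
        OfNat.ofNat_ne_zero, or_false] at ih
      simpa only [add_assoc, Nat.add_comm 1 m] using ih
  exact funext fun m => head m (tails m)

lemma tilde_valInf {u : ℕ → Bool} (hu : NEZ u) : tilde (valInf u) = u := by
  have hex : ∃ v : ℕ → Bool, NEZ v ∧ valInf v = valInf u := ⟨u, hu, rfl⟩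
  rw [tilde, dif_pos hex]
  exact hex.choose_spec.1.eq_of_valInf_eq hu hex.choose_spec.2

end Expansion

section BlockImage

variable {k : ℕ} {sigma : List Bool → List Bool} {weps : List Bool}

def IsBlockImage (k : ℕ) (sigma : List Bool → List Bool) (s t : ℕ → Bool) : Prop :=
  (∀ m, prefixOf t (blockApply k sigma (prefixOf s (m * k))).length
      = blockApply k sigma (prefixOf s (m * k))) ∧
    ∀ L, ∃ m, L ≤ (blockApply k sigma (prefixOf s (m * k))).length

lemma IsBlockImage.prepend {d t : ℕ → Bool} (hdt : IsBlockImage k sigma d t) (hk : 0 < k)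
    {r : List Bool} (hr : k ∣ r.length) :
    IsBlockImage k sigma (_root_.prepend r d) (_root_.prepend (blockApply k sigma r) t) := by
  obtain ⟨q, hq⟩ := hr
  have hlong : ∀ m, blockApply k sigma (prefixOf (_root_.prepend r d) ((q + m) * k))
      = blockApply k sigma r ++ blockApply k sigma (prefixOf d (m * k)) := fun m => by
    rw [show (q + m) * k = r.length + m * k by rw [hq]; ring, prefixOf_prepend,
      blockApply_append hk ⟨q, hq⟩]
  refine ⟨fun m => ?_, fun L => ?_⟩
  · rcases le_total m q with hm | hm
    · refine prefixOf_eq_of_isPrefix (prefixOf_prepend_self _ t)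
        (blockApply_isPrefix_of_isPrefix hk (by simp) ?_)
      have hmk : m * k ≤ r.length := by rw [hq, mul_comm k]; gcongr
      simpa only [prefixOf_prepend_self] using prefixOf_isPrefix_prefixOf (_root_.prepend r d) hmk
    · obtain ⟨m, rfl⟩ := Nat.exists_eq_add_of_le hm
      rw [hlong, List.length_append, prefixOf_prepend, hdt.1]
  · obtain ⟨m, hm⟩ := hdt.2 L
    exact ⟨q + m, by rw [hlong, List.length_append]; omega⟩

lemma iSup_valFin_eq_valInf {t : ℕ → Bool} {g : ℕ → List Bool}
    (hpre : ∀ m, prefixOf t (g m).length = g m) (hunb : ∀ L, ∃ m, L ≤ (g m).length) :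
    ⨆ m, valFin (g m) = valInf t := by
  have hle : ∀ m, valFin (g m) ≤ valInf t := fun m => by
    simpa only [hpre m] using valFin_prefixOf_le_valInf t (g m).length
  refine le_antisymm (ciSup_le hle) (le_of_forall_pos_le_add fun ε hε => ?_)
  obtain ⟨L, hL⟩ := exists_pow_lt_of_lt_one hε (by norm_num : (2:ℝ)⁻¹ < 1)
  obtain ⟨m, hm⟩ := hunb L
  have hge := valInf_le_valFin_prefixOf_add t (g m).length
  rw [hpre m] at hge
  have hsup := le_ciSup ⟨valInf t, Set.forall_mem_range.mpr hle⟩ m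
  have hpow : (2:ℝ)⁻¹ ^ (g m).length ≤ 2⁻¹ ^ L :=
    pow_le_pow_of_le_one (by norm_num) (by norm_num) hm
  linarith

lemma fSigma_valInf_of_isBlockImage (hk : 0 < k) (hwlen : weps.length = k)
    (hweps : sigma weps = []) {s t : ℕ → Bool} (hs : NEZ s) (hst : IsBlockImage k sigma s t) :
    fSigma k sigma weps (valInf s) = valInf t := by
  have hnot_periodic : ¬ ∀ i, s i = weps.getD (i % k) false := fun hper => by
    obtain ⟨m, hm⟩ := hst.2 1
    rw [show s = blockSeq k fun _ => weps from funext hper, prefixOf_blockSeq hk (fun _ => hwlen),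
      blockApply_concatPre hk (fun _ => hwlen)] at hm
    simp [concatPre, hweps] at hm
  rw [fSigma, if_neg, tilde_valInf hs]
  · exact iSup_valFin_eq_valInf hst.1 hst.2
  · rw [tilde_valInf hs]
    exact not_or.mpr ⟨not_not.mpr ⟨s, hs, rfl⟩, hnot_periodic⟩

lemma isBlockImage_blockSeq (hk : 0 < k) {B : ℕ → List Bool} (hB : ∀ i, (B i).length = k)
    {t : ℕ → Bool}
    (hpre : ∀ m, prefixOf t (concatPre (fun i => sigma (B i)) m).length
      = concatPre (fun i => sigma (B i)) m)
    (hunb : ∀ L, ∃ m, L ≤ (concatPre (fun i => sigma (B i)) m).length) :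
    IsBlockImage k sigma (blockSeq k B) t := by
  simp only [IsBlockImage, prefixOf_blockSeq hk hB, blockApply_concatPre hk hB]
  exact ⟨hpre, hunb⟩

lemma exists_nez_isBlockImage (hk : 0 < k) (hwlen : weps.length = k)
    (herase : ∀ w : List Bool, w.length = k → (sigma w = [] ↔ w = weps))
    (hOC : OC k sigma) (t : ℕ → Bool) : ∃ d, NEZ d ∧ IsBlockImage k sigma d t := by
  obtain ⟨u, hu, hut⟩ := hOC t
  have hweps : sigma weps = [] := (herase weps hwlen).mpr rfl
  have hunb : ∀ L, ∃ m, L ≤ (concatPre (fun i => sigma (u i)) m).length :=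
    fun L => ⟨L, le_length_concatPre (fun i => (hu i).2) L⟩
  by_cases hone : true ∈ weps
  · set B : ℕ → List Bool := fun i => if i % 2 = 0 then weps else u (i / 2) with hBdef
    have hB : ∀ i, (B i).length = k := fun i => by
      simp only [hBdef]
      split_ifs
      exacts [hwlen, (hu _).1]
    have himage : ∀ m, concatPre (fun i => sigma (B i)) m
        = concatPre (fun i => sigma (u i)) (m / 2) := fun m => by
      rw [← concatPre_interleave_nil]
      congr 1
      funext i
      simp only [hBdef]
      split_ifs <;> simp [hweps]
    have hone_B : ∀ n, true ∈ B (2 * n) := fun n =>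
      show true ∈ (if 2 * n % 2 = 0 then weps else u (2 * n / 2)) by
        rw [if_pos (by omega)]
        exact hone
    refine ⟨blockSeq k B, nez_blockSeq hk hB fun n => ⟨2 * n, by omega, hone_B n⟩,
      isBlockImage_blockSeq hk hB (fun m => by rw [himage]; exact (hut _).symm) fun L => ?_⟩
    obtain ⟨m, hm⟩ := hunb L
    exact ⟨2 * m, by rwa [himage, Nat.mul_div_cancel_left m two_pos]⟩
  · have hzero : ∀ w : List Bool, true ∉ w → w = List.replicate w.length false := fun w hw =>
      List.eq_replicate_iff.mpr ⟨rfl, fun b hb => by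
        cases b
        exacts [rfl, absurd hb hw]⟩
    have hone_u : ∀ i, true ∈ u i := fun i => by
      by_contra h
      refine (hu i).2 ((herase _ (hu i).1).mpr ?_)
      rw [hzero _ h, hzero _ hone, (hu i).1, hwlen]
    exact ⟨blockSeq k u, nez_blockSeq hk (fun i => (hu i).1) fun n => ⟨n, le_rfl, hone_u n⟩,
      isBlockImage_blockSeq hk (fun i => (hu i).1) (fun m => (hut m).symm) hunb⟩

lemma exists_prefixOf_fSigma_eq (hk : 0 < k) (hwlen : weps.length = k)
    (herase : ∀ w : List Bool, w.length = k → (sigma w = [] ↔ w = weps))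
    (hOC : OC k sigma) {r : List Bool} (hr : k ∣ r.length) {t : ℕ → Bool}
    (ht : prefixOf t (blockApply k sigma r).length = blockApply k sigma r) :
    ∃ s, prefixOf s r.length = r ∧ fSigma k sigma weps (valInf s) = valInf t := by
  obtain ⟨d, hd, hdt⟩ :=
    exists_nez_isBlockImage hk hwlen herase hOC fun i => t (i + (blockApply k sigma r).length)
  refine ⟨prepend r d, prefixOf_prepend_self r d, ?_⟩
  rw [fSigma_valInf_of_isBlockImage hk hwlen ((herase weps hwlen).mpr rfl) (hd.prepend r)
    (hdt.prepend hk hr), prepend_eq_of_prefixOf ht]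

end BlockImage

section StrongErasure

variable {k : ℕ} {sigma : List Bool → List Bool} {weps : List Bool}

lemma isPrefix_and_dvd_of_mem_kRound {p r : List Bool} (h : r ∈ kRound k p) :
    p <+: r ∧ k ∣ r.length := by
  obtain ⟨v, rfl, hlen⟩ := h
  exact ⟨List.prefix_append p v, _, hlen⟩

lemma mem_wIter_succ_iff (n : ℕ) (p u : List Bool) :
    u ∈ wIter k sigma (n + 1) p ↔
      ∃ r ∈ kRound k p, u ∈ wIter k sigma n (blockApply k sigma r) := by
  induction n generalizing p u with
  | zero =>
    constructor
    · rintro ⟨_, rfl, r, hr, rfl⟩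
      exact ⟨r, hr, rfl⟩
    · rintro ⟨r, hr, rfl⟩
      exact ⟨p, rfl, r, hr, rfl⟩
  | succ n ih =>
    constructor
    · rintro ⟨q, hq, r, hr, rfl⟩
      obtain ⟨r', hr', hq'⟩ := (ih p q).mp hq
      exact ⟨r', hr', q, hq', r, hr, rfl⟩
    · rintro ⟨r, hr, q, hq, r', hr', rfl⟩
      exact ⟨q, (ih p q).mpr ⟨r, hr, hq⟩, r', hr', rfl⟩

lemma nil_mem_wIter_succ {n : ℕ} {p : List Bool} (h : [] ∈ wIter k sigma n p) :
    [] ∈ wIter k sigma (n + 1) p := by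
  refine ⟨[], h, [], ⟨[], rfl, ?_⟩, blockApply_nil.symm⟩
  rcases Nat.eq_zero_or_pos k with rfl | hk
  · simp
  · simp [Nat.div_eq_of_lt (Nat.sub_lt hk one_pos)]

theorem exists_prefixOf_iterate_fSigma_eq (hk : 0 < k) (hwlen : weps.length = k)
    (herase : ∀ w : List Bool, w.length = k → (sigma w = [] ↔ w = weps))
    (hOC : OC k sigma) (n : ℕ) {p : List Bool} (hp : [] ∈ wIter k sigma (n + 1) p)
    (t : ℕ → Bool) :
    ∃ s, prefixOf s p.length = p ∧ (fSigma k sigma weps)^[n + 1] (valInf s) = valInf t := by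
  induction n generalizing p t with
  | zero =>
    obtain ⟨r, hr, hnil⟩ := (mem_wIter_succ_iff 0 p []).mp hp
    obtain ⟨hpr, hdvd⟩ := isPrefix_and_dvd_of_mem_kRound hr
    have hnil : [] = blockApply k sigma r := hnil
    obtain ⟨s, hs, hst⟩ :=
      exists_prefixOf_fSigma_eq hk hwlen herase hOC hdvd (t := t) (by rw [← hnil]; rfl)
    exact ⟨s, prefixOf_eq_of_isPrefix hs hpr, hst⟩
  | succ n ih =>
    obtain ⟨r, hr, hmem⟩ := (mem_wIter_succ_iff (n + 1) p []).mp hp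
    obtain ⟨hpr, hdvd⟩ := isPrefix_and_dvd_of_mem_kRound hr
    obtain ⟨s', hs', hs't⟩ := ih hmem t
    obtain ⟨s, hs, hss'⟩ := exists_prefixOf_fSigma_eq hk hwlen herase hOC hdvd hs'
    exact ⟨s, prefixOf_eq_of_isPrefix hs hpr, by rw [Function.iterate_succ_apply, hss', hs't]⟩

end StrongErasure

theorem fSigma_sensitive_general
    (k : Nat) (sigma : List Bool -> List Bool) (weps : List Bool)
    (hk : 2 ≤ k) (hlen : weps.length = k)
    (herase : ∀ w : List Bool, w.length = k → (sigma w = [] ↔ w = weps))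
    (hSE : ∀ w : List Bool, ∃ n : Nat, [] ∈ wIter k sigma n w)
    (hOC : OC k sigma) :
    ∀ x ∈ Set.Icc (0:ℝ) 1, ∀ δ > 0, ∃ z ∈ Set.Icc (0:ℝ) 1,
      |x - z| < δ ∧ ∃ n : Nat,
        (1:ℝ)/2 ≤ |(fSigma k sigma weps)^[n] x - (fSigma k sigma weps)^[n] z| := by
  intro x hx δ hδ
  obtain ⟨m, hm⟩ := exists_pow_lt_of_lt_one hδ (by norm_num : (2:ℝ)⁻¹ < 1)
  obtain ⟨p, rfl, hpx, hxp⟩ := exists_valFin_approx hx m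
  obtain ⟨n, hn⟩ := hSE p
  set y := (fSigma k sigma weps)^[n + 1] x
  obtain ⟨t, ht⟩ : ∃ t : ℕ → Bool, 1 / 2 ≤ |y - valInf t| := by
    by_cases hy : y ≤ 1 / 2
    · refine ⟨fun _ => true, ?_⟩
      rw [valInf_const_true, abs_sub_comm]
      exact le_abs.mpr (.inl (by linarith))
    · refine ⟨fun _ => false, ?_⟩
      rw [valInf_const_false, sub_zero]
      exact le_abs.mpr (.inl (by linarith))
  obtain ⟨s, hsp, hs⟩ := exists_prefixOf_iterate_fSigma_eq (by omega) hlen herase hOC n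
    (nil_mem_wIter_succ hn) t
  exact ⟨valInf s, ⟨valInf_nonneg s, valInf_le_one s⟩,
    (abs_sub_valInf_le hpx hxp hsp).trans_lt hm, n + 1, hs ▸ ht⟩

/-- if `sigma` is strongly erasing and satisfies the optimality
condition, `fSigma` has sensitive dependence on initial conditions with
sensitivity constant `1/2`. -/
theorem fSigma_sensitive
    (k : Nat) (sigma : List Bool -> List Bool) (weps : List Bool)
    (hk : 2 ≤ k) (hlen : weps.length = k)
    (hne1 : weps ≠ List.replicate k true)
    (herase : ∀ w : List Bool, w.length = k → (sigma w = [] ↔ w = weps))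
    (hSE : ∀ w : List Bool, ∃ n : Nat, [] ∈ wIter k sigma n w)
    (hOC : OC k sigma) :
    ∀ x ∈ Set.Icc (0:ℝ) 1, ∀ δ > 0, ∃ z ∈ Set.Icc (0:ℝ) 1,
      |x - z| < δ ∧ ∃ n : Nat,
        (1:ℝ)/2 ≤ |(fSigma k sigma weps)^[n] x - (fSigma k sigma weps)^[n] z| :=
  fSigma_sensitive_general k sigma weps hk hlen herase hSE hOC
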